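/- Let G be a locally compact Hausdorff topological group with a left Haar measure, let H and K be separable complex Hilbert spaces, let X ⊆ B(H;K) be a norm-closed linear subspace closed under the ternary product (a,b,c) ↦ a b* c, and let α : G → (X → X) be a group homomorphism such that each α_g is a surjective linear isometry satisfying α_g(a b* c) = α_g(a)·α_g(b)*·α_g(c), and for each x ∈ X the map g ↦ α_g(x) is WOT-continuous. For x ∈ X let π(x) : L²(G;H) → L²(G;K) be the bounded operator with (π(x)ζ)(h) = α_{h⁻¹}(x)(ζ(h)) a.e., let σ_g and τ_g be the left-translation unitaries on L²(G;H) and L²(G;K) respectively ((σ_gζ)(h) = ζ(g⁻¹h), (τ_gη)(h) = η(g⁻¹h)), and let N denote the WOT-closed linear span of {τ_g : g ∈ G} in B(L²(G;K)). Then the following four WOT-closed linear spans in B(L²(G;H); L²(G;K)) coincide: (1) the WOT-closed linear span of {B·π(x) : B ∈ N, x ∈ X}; (2) the WOT-closed linear span of {τ_g·π(x) : g ∈ G, x ∈ X}; (3) the WOT-closed linear span of {τ_g·π(x)·σ_{g'} : g, g' ∈ G, x ∈ X}; (4) the WOT-closed linear span of {π(x)·σ_g : g ∈ G, x ∈ X}.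 (This common space is the crossed product G ⋉_α X.) -/

import Mathlib

/-!
The integrated representation is covariant, `π x ∘ σ g = τ g ∘ π (α g⁻¹ x)`: evaluate both sides
at `h`, pull the a.e. identities back along left translation (Haar measure is left invariant), and
use `α (h⁻¹ g) ∘ α g⁻¹ = α h⁻¹`. Covariance, together with `τ g ∘ τ g' = τ (g g')` and `σ 1 = 1`,
makes the generating sets of (2), (3) and (4) literally equal. For (1), right composition with a
fixed operator is WOT-continuous and linear, so it carries the WOT-closed span of the `τ g` into
the WOT-closed span of the `τ g ∘ π x`.
-/

open Filter Topology MeasureTheory ContinuousLinearMap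

noncomputable section

/-- The closure of the linear span of a set of operators in the weak operator topology. -/
def wotClosedSpan {E F : Type*} [NormedAddCommGroup E] [NormedSpace ℂ E]
    [NormedAddCommGroup F] [NormedSpace ℂ F] (S : Set (E →L[ℂ] F)) : Set (E →L[ℂ] F) :=
  (ContinuousLinearMapWOT.ofCLM : (E →L[ℂ] F) → (E →WOT[ℂ] F)) ⁻¹'
    (closure ((ContinuousLinearMapWOT.ofCLM : (E →L[ℂ] F) → (E →WOT[ℂ] F)) '' (Submodule.span ℂ S : Set (E →L[ℂ] F))))

section WOT

open ContinuousLinearMapWOT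

variable {E F F' : Type*} [NormedAddCommGroup E] [NormedSpace ℂ E]
  [NormedAddCommGroup F] [NormedSpace ℂ F] [NormedAddCommGroup F'] [NormedSpace ℂ F']

lemma mem_wotClosedSpan_iff {S : Set (E →L[ℂ] F)} {A : E →L[ℂ] F} :
    A ∈ wotClosedSpan S ↔ ofCLM A ∈ (Submodule.span ℂ (ofCLM '' S)).topologicalClosure := by
  have hS : ofCLM '' S =
      (linearEquiv (σ := RingHom.id ℂ) (E := E) (F := F) ℂ).symm.toLinearMap '' S := rfl
  rw [hS, Submodule.span_image]
  rfl

lemma subset_wotClosedSpan (S : Set (E →L[ℂ] F)) : S ⊆ wotClosedSpan S := fun _ hA =>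
  subset_closure ⟨_, Submodule.subset_span hA, rfl⟩

lemma wotClosedSpan_mono {S T : Set (E →L[ℂ] F)} (h : S ⊆ T) :
    wotClosedSpan S ⊆ wotClosedSpan T :=
  Set.preimage_mono (closure_mono (Set.image_mono (Submodule.span_mono h)))

lemma wotClosedSpan_subset_wotClosedSpan {S T : Set (E →L[ℂ] F)} (h : S ⊆ wotClosedSpan T) :
    wotClosedSpan S ⊆ wotClosedSpan T := by
  intro A hA
  rw [mem_wotClosedSpan_iff] at hA ⊢
  refine Submodule.topologicalClosure_minimal _ ?_ (Submodule.isClosed_topologicalClosure _) hA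
  rw [Submodule.span_le]
  rintro _ ⟨B, hB, rfl⟩
  exact mem_wotClosedSpan_iff.1 (h hB)

lemma comp_mem_wotClosedSpan_image {S : Set (F →L[ℂ] F')} {B : F →L[ℂ] F'} (A : E →L[ℂ] F)
    (hB : B ∈ wotClosedSpan S) : B ∘L A ∈ wotClosedSpan ((· ∘L A) '' S) := by
  rw [mem_wotClosedSpan_iff] at hB ⊢
  set precomp : (F →WOT[ℂ] F') →L[ℂ] E →WOT[ℂ] F' := precompCLM (ofCLM A)
  have himage : ofCLM '' ((· ∘L A) '' S) = precomp '' (ofCLM '' S) := by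
    rw [Set.image_image, Set.image_image]
    exact Set.image_congr fun C _ => by ext; simp [precomp]
  have hcomp : ofCLM (B ∘L A) = precomp (ofCLM B) := by ext; simp [precomp]
  rw [← SetLike.mem_coe, Submodule.topologicalClosure_coe] at hB ⊢
  rw [himage, hcomp]
  refine map_mem_closure precomp.continuous hB fun C hC => ?_
  exact Submodule.apply_mem_span_image_of_mem_span precomp.toLinearMap hC

lemma wotClosedSpan_comp_wotClosedSpan {ι κ : Type*} (τ : ι → F →L[ℂ] F') (X : Set κ)
    (π : κ → E →L[ℂ] F) :
    wotClosedSpan {T | ∃ B ∈ wotClosedSpan {B | ∃ g, B = τ g}, ∃ x ∈ X, T = B ∘L π x} =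
      wotClosedSpan {T | ∃ g, ∃ x ∈ X, T = τ g ∘L π x} := by
  refine (wotClosedSpan_subset_wotClosedSpan ?_).antisymm
    (wotClosedSpan_subset_wotClosedSpan ?_)
  · rintro _ ⟨B, hB, x, hx, rfl⟩
    refine wotClosedSpan_mono ?_ (comp_mem_wotClosedSpan_image (π x) hB)
    rintro _ ⟨_, ⟨g, rfl⟩, rfl⟩
    exact ⟨g, x, hx, rfl⟩
  · rintro _ ⟨g, x, hx, rfl⟩
    exact subset_wotClosedSpan _ ⟨τ g, subset_wotClosedSpan _ ⟨g, rfl⟩, x, hx, rfl⟩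

end WOT

section Covariance

variable {G κ E F : Type*} [Group G] [NormedAddCommGroup E] [NormedSpace ℂ E]
  [NormedAddCommGroup F] [NormedSpace ℂ F]

def IsCovariant (X : Set κ) (α : G → κ → κ) (π : κ → E →L[ℂ] F) (σ : G → E →L[ℂ] E)
    (τ : G → F →L[ℂ] F) : Prop :=
  ∀ g, ∀ x ∈ X, π x ∘L σ g = τ g ∘L π (α g⁻¹ x)

namespace IsCovariant

variable {X : Set κ} {α : G → κ → κ} {π : κ → E →L[ℂ] F} {σ : G → E →L[ℂ] E}
  {τ : G → F →L[ℂ] F}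

lemma setOf_comp_translation_eq (hcov : IsCovariant X α π σ τ)
    (hmaps : ∀ g, Set.MapsTo (α g) X X) (hinv : ∀ g, ∀ x ∈ X, α g⁻¹ (α g x) = x) :
    {T | ∃ g, ∃ x ∈ X, T = π x ∘L σ g} = {T | ∃ g, ∃ x ∈ X, T = τ g ∘L π x} := by
  ext T
  constructor
  · rintro ⟨g, x, hx, rfl⟩
    exact ⟨g, α g⁻¹ x, hmaps g⁻¹ hx, hcov g x hx⟩
  · rintro ⟨g, x, hx, rfl⟩
    refine ⟨g, α g x, hmaps g hx, ?_⟩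
    rw [hcov g _ (hmaps g hx), hinv g x hx]

lemma setOf_translation_comp_comp_translation_eq (hcov : IsCovariant X α π σ τ)
    (hmaps : ∀ g, Set.MapsTo (α g) X X) (hτ : ∀ g g', τ g ∘L τ g' = τ (g * g'))
    (hσ : σ 1 = .id ℂ E) :
    {T | ∃ g g', ∃ x ∈ X, T = τ g ∘L (π x ∘L σ g')} = {T | ∃ g, ∃ x ∈ X, T = τ g ∘L π x} := by
  ext T
  constructor
  · rintro ⟨g, g', x, hx, rfl⟩
    refine ⟨g * g', α g'⁻¹ x, hmaps g'⁻¹ hx, ?_⟩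
    rw [hcov g' x hx, ← comp_assoc, hτ]
  · rintro ⟨g, x, hx, rfl⟩
    exact ⟨g, 1, x, hx, by rw [hσ, comp_id]⟩

end IsCovariant

end Covariance

section Translation

open scoped ENNReal

variable {G : Type*} [Group G] [MeasurableSpace G] {μ : Measure G}
  {p : ℝ≥0∞} [Fact (1 ≤ p)] {E : Type*} [NormedAddCommGroup E] [NormedSpace ℂ E]

def IsLeftTranslation (τ : G → Lp E p μ →L[ℂ] Lp E p μ) : Prop :=
  ∀ g η, ∀ᵐ h ∂μ, (τ g η : G → E) h = (η : G → E) (g⁻¹ * h)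

namespace IsLeftTranslation

variable {τ : G → Lp E p μ →L[ℂ] Lp E p μ}

lemma one (hτ : IsLeftTranslation τ) : τ 1 = .id ℂ _ := by
  ext η
  filter_upwards [hτ 1 η] with h hh
  rw [hh, inv_one, one_mul, id_apply]

lemma comp [MeasurableMul G] [μ.IsMulLeftInvariant] (hτ : IsLeftTranslation τ) (g g' : G) :
    τ g ∘L τ g' = τ (g * g') := by
  ext η
  filter_upwards [hτ g (τ g' η), (eventually_mul_left_iff μ g⁻¹).2 (hτ g' η), hτ (g * g') η]
    with h hg hg' hgg'
  rw [comp_apply, hg, hg', hgg', mul_inv_rev, mul_assoc]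

end IsLeftTranslation

lemma isCovariant_of_isLeftTranslation [MeasurableMul G] [μ.IsMulLeftInvariant]
    {H K : Type*} [NormedAddCommGroup H] [NormedSpace ℂ H] [NormedAddCommGroup K] [NormedSpace ℂ K]
    {X : Set (H →L[ℂ] K)} {α : G → (H →L[ℂ] K) → (H →L[ℂ] K)}
    (hmaps : ∀ g, Set.MapsTo (α g) X X) (hhom : ∀ g h : G, ∀ x ∈ X, α (g * h) x = α g (α h x))
    {π : (H →L[ℂ] K) → (Lp H p μ →L[ℂ] Lp K p μ)}
    (hπ : ∀ x ∈ X, ∀ ζ : Lp H p μ, ∀ᵐ h ∂μ, (π x ζ : G → K) h = α h⁻¹ x ((ζ : G → H) h))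
    {σ : G → (Lp H p μ →L[ℂ] Lp H p μ)} (hσ : IsLeftTranslation σ)
    {τ : G → (Lp K p μ →L[ℂ] Lp K p μ)} (hτ : IsLeftTranslation τ) :
    IsCovariant X α π σ τ := by
  intro g x hx
  ext ζ
  filter_upwards [hπ x hx (σ g ζ), hσ g ζ, hτ g (π (α g⁻¹ x) ζ),
    (eventually_mul_left_iff μ g⁻¹).2 (hπ _ (hmaps g⁻¹ hx) ζ)] with h hπσ hσ' hτπ hπ'
  rw [comp_apply, comp_apply, hπσ, hσ', hτπ, hπ', mul_inv_rev, inv_inv, ← hhom _ _ x hx,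
    mul_inv_cancel_right]

end Translation

theorem crossed_product_descriptions_coincide_general
    {G : Type*} [Group G] [TopologicalSpace G] [IsTopologicalGroup G]
    [MeasurableSpace G] [BorelSpace G]
    (μ : MeasureTheory.Measure G) [μ.IsHaarMeasure]
    {H K : Type*}
    [NormedAddCommGroup H] [InnerProductSpace ℂ H]
    [NormedAddCommGroup K] [InnerProductSpace ℂ K]
    (X : Set (H →L[ℂ] K))
    (α : G → (H →L[ℂ] K) → (H →L[ℂ] K))
    (hbij : ∀ g : G, Set.BijOn (α g) X X)
    (hhom : ∀ g h : G, ∀ x ∈ X, α (g * h) x = α g (α h x))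
    (hone : ∀ x ∈ X, α (1 : G) x = x)
    -- the integrated representation π
    (π : (H →L[ℂ] K) → (Lp H 2 μ →L[ℂ] Lp K 2 μ))
    (hπ : ∀ x ∈ X, ∀ ζ : Lp H 2 μ, ∀ᵐ h ∂μ, (π x ζ : G → K) h = α h⁻¹ x ((ζ : G → H) h))
    -- the left translation unitaries σ and τ
    (σ : G → (Lp H 2 μ →L[ℂ] Lp H 2 μ))
    (hσ : ∀ g : G, ∀ ζ : Lp H 2 μ, ∀ᵐ h ∂μ, (σ g ζ : G → H) h = (ζ : G → H) (g⁻¹ * h))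
    (τ : G → (Lp K 2 μ →L[ℂ] Lp K 2 μ))
    (hτ : ∀ g : G, ∀ η : Lp K 2 μ, ∀ᵐ h ∂μ, (τ g η : G → K) h = (η : G → K) (g⁻¹ * h))
    -- N is the WOT-closed linear span of the translation unitaries τ_g
    (N : Set (Lp K 2 μ →L[ℂ] Lp K 2 μ))
    (hN : N = wotClosedSpan {B | ∃ g : G, B = τ g}) :
    wotClosedSpan {T | ∃ B ∈ N, ∃ x ∈ X, T = B ∘L π x} =
      wotClosedSpan {T | ∃ g : G, ∃ x ∈ X, T = (τ g) ∘L π x} ∧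
    wotClosedSpan {T | ∃ B ∈ N, ∃ x ∈ X, T = B ∘L π x} =
      wotClosedSpan {T | ∃ g g' : G, ∃ x ∈ X, T = (τ g) ∘L ((π x) ∘L σ g')} ∧
    wotClosedSpan {T | ∃ B ∈ N, ∃ x ∈ X, T = B ∘L π x} =
      wotClosedSpan {T | ∃ g : G, ∃ x ∈ X, T = (π x) ∘L σ g} := by
  have hmaps (g : G) : Set.MapsTo (α g) X X := (hbij g).mapsTo
  have hinv (g : G) (x : H →L[ℂ] K) (hx : x ∈ X) : α g⁻¹ (α g x) = x := by
    rw [← hhom _ _ x hx, inv_mul_cancel, hone x hx]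
  have hcov : IsCovariant X α π σ τ := isCovariant_of_isLeftTranslation hmaps hhom hπ hσ hτ
  have h12 : wotClosedSpan {T | ∃ B ∈ N, ∃ x ∈ X, T = B ∘L π x} =
      wotClosedSpan {T | ∃ g : G, ∃ x ∈ X, T = (τ g) ∘L π x} :=
    hN ▸ wotClosedSpan_comp_wotClosedSpan τ X π
  refine ⟨h12, ?_, ?_⟩
  · rw [hcov.setOf_translation_comp_comp_translation_eq hmaps (IsLeftTranslation.comp hτ)
      (IsLeftTranslation.one hσ), h12]
  · rw [hcov.setOf_comp_translation_eq hmaps hinv, h12]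

/-- The four natural descriptions of the crossed product `G ⋉_α X` of a W*-TRO by a continuous
group action coincide. -/
theorem crossed_product_descriptions_coincide
    {G : Type*} [Group G] [TopologicalSpace G] [IsTopologicalGroup G]
    [LocallyCompactSpace G] [T2Space G] [MeasurableSpace G] [BorelSpace G]
    (μ : MeasureTheory.Measure G) [μ.IsHaarMeasure]
    {H K : Type*}
    [NormedAddCommGroup H] [InnerProductSpace ℂ H] [CompleteSpace H]
    [TopologicalSpace.SeparableSpace H]
    [NormedAddCommGroup K] [InnerProductSpace ℂ K] [CompleteSpace K]
    [TopologicalSpace.SeparableSpace K]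
    (X : Set (H →L[ℂ] K))
    (hX0 : (0 : H →L[ℂ] K) ∈ X)
    (hXadd : ∀ a ∈ X, ∀ b ∈ X, a + b ∈ X)
    (hXsmul : ∀ (c : ℂ), ∀ a ∈ X, c • a ∈ X)
    (hXclosed : IsClosed X)
    (hXtro : ∀ a ∈ X, ∀ b ∈ X, ∀ c ∈ X, a ∘L ((ContinuousLinearMap.adjoint b) ∘L c) ∈ X)
    (α : G → (H →L[ℂ] K) → (H →L[ℂ] K))
    (hbij : ∀ g : G, Set.BijOn (α g) X X)
    (hadd : ∀ g : G, ∀ x ∈ X, ∀ y ∈ X, α g (x + y) = α g x + α g y)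
    (hsmul : ∀ g : G, ∀ (c : ℂ), ∀ x ∈ X, α g (c • x) = c • α g x)
    (hiso : ∀ g : G, ∀ x ∈ X, ‖α g x‖ = ‖x‖)
    (htro : ∀ g : G, ∀ a ∈ X, ∀ b ∈ X, ∀ c ∈ X,
      α g (a ∘L ((ContinuousLinearMap.adjoint b) ∘L c)) =
        (α g a) ∘L ((ContinuousLinearMap.adjoint (α g b)) ∘L (α g c)))
    (hhom : ∀ g h : G, ∀ x ∈ X, α (g * h) x = α g (α h x))
    (hone : ∀ x ∈ X, α (1 : G) x = x)
    (hcont : ∀ x ∈ X, Continuous fun g : G => (ContinuousLinearMapWOT.ofCLM (α g x) : H →WOT[ℂ] K))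
    -- the integrated representation π
    (π : (H →L[ℂ] K) → (Lp H 2 μ →L[ℂ] Lp K 2 μ))
    (hπ : ∀ x ∈ X, ∀ ζ : Lp H 2 μ, ∀ᵐ h ∂μ, (π x ζ : G → K) h = α h⁻¹ x ((ζ : G → H) h))
    -- the left translation unitaries σ and τ
    (σ : G → (Lp H 2 μ →L[ℂ] Lp H 2 μ))
    (hσ : ∀ g : G, ∀ ζ : Lp H 2 μ, ∀ᵐ h ∂μ, (σ g ζ : G → H) h = (ζ : G → H) (g⁻¹ * h))
    (τ : G → (Lp K 2 μ →L[ℂ] Lp K 2 μ))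
    (hτ : ∀ g : G, ∀ η : Lp K 2 μ, ∀ᵐ h ∂μ, (τ g η : G → K) h = (η : G → K) (g⁻¹ * h))
    -- N is the WOT-closed linear span of the translation unitaries τ_g
    (N : Set (Lp K 2 μ →L[ℂ] Lp K 2 μ))
    (hN : N = wotClosedSpan {B | ∃ g : G, B = τ g}) :
    wotClosedSpan {T | ∃ B ∈ N, ∃ x ∈ X, T = B ∘L π x} =
      wotClosedSpan {T | ∃ g : G, ∃ x ∈ X, T = (τ g) ∘L π x} ∧
    wotClosedSpan {T | ∃ B ∈ N, ∃ x ∈ X, T = B ∘L π x} =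
      wotClosedSpan {T | ∃ g g' : G, ∃ x ∈ X, T = (τ g) ∘L ((π x) ∘L σ g')} ∧
    wotClosedSpan {T | ∃ B ∈ N, ∃ x ∈ X, T = B ∘L π x} =
      wotClosedSpan {T | ∃ g : G, ∃ x ∈ X, T = (π x) ∘L σ g} :=
  crossed_product_descriptions_coincide_general μ X α hbij hhom hone π hπ σ hσ τ hτ N hN

end
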